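/- Let G be a graph with independent core vertices, and let u, w be non-adjacent core-forbidden vertices. Let G' = G + {u,w}. Then every kernel vector of A(G) is also a kernel vector of A(G'); consequently η(G) ≤ η(G'), and if η(G') = η(G) then the core vertex set and the nullspace of G' coincide with those of G. -/

import Mathlib

open scoped Classical
open Matrix

variable {V : Type*} [Fintype V] [DecidableEq V]

/-- Nullity of a real square matrix: dimension of its kernel. -/
noncomputable def nullity {m : Type*} [Fintype m] (A : Matrix m m ℝ) : ℕ :=
  Module.finrank ℝ (LinearMap.ker A.mulVecLin)

/-- `v` is a core vertex with respect to the symmetric matrix `A`. -/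
def IsCore {m : Type*} [Fintype m] (A : Matrix m m ℝ) (v : m) : Prop :=
  ∃ x : m → ℝ, A.mulVec x = 0 ∧ x v ≠ 0

/-- The perturbation matrix adding the single edge `{u,w}`. -/
def edgeMat (u w : V) : Matrix V V ℝ :=
  Matrix.of fun i j => if (i = u ∧ j = w) ∨ (i = w ∧ j = u) then 1 else 0

/-! A kernel vector of `A(G)` vanishes at the core-forbidden vertices `u` and `w`, and the
edge matrix only reads those two coordinates, so it annihilates every kernel vector of `A(G)`.
Hence `ker A(G) ≤ ker A(G + {u,w})`, and when the two finite dimensions agree the kernels, and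
with them the core vertex sets, coincide. -/

section Kernel

variable {m : Type*} [Fintype m]

theorem apply_eq_zero_of_not_isCore {A : Matrix m m ℝ} {v : m} (hv : ¬ IsCore A v)
    {x : m → ℝ} (hx : A *ᵥ x = 0) : x v = 0 :=
  not_not.mp fun hxv => hv ⟨x, hx, hxv⟩

theorem nullity_le_of_mulVec_eq_zero_imp {A B : Matrix m m ℝ}
    (h : ∀ x : m → ℝ, A *ᵥ x = 0 → B *ᵥ x = 0) : nullity A ≤ nullity B :=
  Submodule.finrank_mono fun x hx => h x hx

theorem mulVec_eq_zero_iff_of_nullity_eq {A B : Matrix m m ℝ}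
    (h : ∀ x : m → ℝ, A *ᵥ x = 0 → B *ᵥ x = 0) (hnul : nullity B = nullity A)
    (x : m → ℝ) : B *ᵥ x = 0 ↔ A *ᵥ x = 0 := by
  have hker : LinearMap.ker A.mulVecLin = LinearMap.ker B.mulVecLin :=
    Submodule.eq_of_le_of_finrank_eq (fun y hy => h y hy) hnul.symm
  exact (SetLike.ext_iff.mp hker x).symm

theorem isCore_iff_of_mulVec_eq_zero_iff {A B : Matrix m m ℝ}
    (h : ∀ x : m → ℝ, B *ᵥ x = 0 ↔ A *ᵥ x = 0) (v : m) : IsCore B v ↔ IsCore A v :=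
  exists_congr fun x => and_congr_left' (h x)

end Kernel

theorem edgeMat_mulVec_eq_zero {u w : V} {x : V → ℝ} (hxu : x u = 0) (hxw : x w = 0) :
    edgeMat u w *ᵥ x = 0 := by
  funext i
  refine Finset.sum_eq_zero fun j _ => ?_
  by_cases h : (i = u ∧ j = w) ∨ (i = w ∧ j = u)
  · rcases h with ⟨-, rfl⟩ | ⟨-, rfl⟩ <;> simp [hxu, hxw]
  · simp [edgeMat, h]

theorem add_edgeMat_mulVec_eq_zero {A : Matrix V V ℝ} {u w : V}
    (hu : ¬ IsCore A u) (hw : ¬ IsCore A w) {x : V → ℝ} (hx : A *ᵥ x = 0) :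
    (A + edgeMat u w) *ᵥ x = 0 := by
  rw [add_mulVec, hx, edgeMat_mulVec_eq_zero (apply_eq_zero_of_not_isCore hu hx)
    (apply_eq_zero_of_not_isCore hw hx), add_zero]

theorem stmt_17_general (G : SimpleGraph V) [DecidableRel G.Adj] (u w : V)
    (hu : ¬ IsCore (G.adjMatrix ℝ) u) (hw : ¬ IsCore (G.adjMatrix ℝ) w) :
    (∀ x : V → ℝ, (G.adjMatrix ℝ).mulVec x = 0 →
        ((G.adjMatrix ℝ) + edgeMat u w).mulVec x = 0)
      ∧ nullity (G.adjMatrix ℝ) ≤ nullity ((G.adjMatrix ℝ) + edgeMat u w)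
      ∧ (nullity ((G.adjMatrix ℝ) + edgeMat u w) = nullity (G.adjMatrix ℝ) →
          (∀ v : V, IsCore ((G.adjMatrix ℝ) + edgeMat u w) v ↔
              IsCore (G.adjMatrix ℝ) v)
            ∧ ∀ x : V → ℝ, ((G.adjMatrix ℝ) + edgeMat u w).mulVec x = 0 ↔
                (G.adjMatrix ℝ).mulVec x = 0) := by
  have hker : ∀ x : V → ℝ, G.adjMatrix ℝ *ᵥ x = 0 →
      (G.adjMatrix ℝ + edgeMat u w) *ᵥ x = 0 :=
    fun _ => add_edgeMat_mulVec_eq_zero hu hw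
  refine ⟨hker, nullity_le_of_mulVec_eq_zero_imp hker, fun hnul => ?_⟩
  have hiff := mulVec_eq_zero_iff_of_nullity_eq hker hnul
  exact ⟨isCore_iff_of_mulVec_eq_zero_iff hiff, hiff⟩

/-- Adding an edge between two non-adjacent core-forbidden vertices of a graph with
independent core vertices: every kernel vector of `A(G)` remains a kernel vector of
`A(G+e)`, so `η(G) ≤ η(G+e)`; and if the nullity is preserved then the core vertex
set and the nullspace are preserved. -/
theorem stmt_17 (G : SimpleGraph V) [DecidableRel G.Adj] (u w : V)
    (huw : u ≠ w) (hadj : ¬ G.Adj u w)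
    (hu : ¬ IsCore (G.adjMatrix ℝ) u) (hw : ¬ IsCore (G.adjMatrix ℝ) w)
    (hind : ∀ a b : V, IsCore (G.adjMatrix ℝ) a → IsCore (G.adjMatrix ℝ) b →
      ¬ G.Adj a b) :
    (∀ x : V → ℝ, (G.adjMatrix ℝ).mulVec x = 0 →
        ((G.adjMatrix ℝ) + edgeMat u w).mulVec x = 0)
      ∧ nullity (G.adjMatrix ℝ) ≤ nullity ((G.adjMatrix ℝ) + edgeMat u w)
      ∧ (nullity ((G.adjMatrix ℝ) + edgeMat u w) = nullity (G.adjMatrix ℝ) →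
          (∀ v : V, IsCore ((G.adjMatrix ℝ) + edgeMat u w) v ↔
              IsCore (G.adjMatrix ℝ) v)
            ∧ ∀ x : V → ℝ, ((G.adjMatrix ℝ) + edgeMat u w).mulVec x = 0 ↔
                (G.adjMatrix ℝ).mulVec x = 0) :=
  stmt_17_general G u w hu hw
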